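/- Let T be an increasing tableau of shape λ with r rows and entries in {1,…,q}. Then a value ℓ appears in the union of the bottom i rows of T if and only if ℓ is an excedance of the promotion digraph prom_{r−i}(T). In particular, the entries of the bottom row of T are exactly the excedances of prom_{r−1}(T). -/

import Mathlib

open Classical

/-- A cell `(row, col)` (0-indexed) of a Young diagram. -/
abbrev Cell : Type := ℕ × ℕ

/-- The cell `c` lies in the Young diagram of the shape `lam`. -/
def inShape (lam : List ℕ) (c : Cell) : Prop := c.2 < lam.getD c.1 0

/-- `lam` is an integer partition (weakly decreasing list of positive parts). -/
def IsPartition (lam : List ℕ) : Prop :=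
  lam.Pairwise (· ≥ ·) ∧ ∀ x ∈ lam, 0 < x

/-- An increasing tableau of shape `lam` with entries in `{1,…,q}`
(rows and columns strictly increase); cells outside the shape carry `0`. -/
structure IncTab (lam : List ℕ) (q : ℕ) where
  entry : Cell → ℕ
  entry_pos : ∀ c, inShape lam c → 1 ≤ entry c
  entry_le : ∀ c, inShape lam c → entry c ≤ q
  row_strict : ∀ i j : ℕ, inShape lam (i, j + 1) → entry (i, j) < entry (i, j + 1)
  col_strict : ∀ i j : ℕ, inShape lam (i + 1, j) → entry (i, j) < entry (i + 1, j)
  zero_outside : ∀ c, ¬ inShape lam c → entry c = 0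

/-- A standard Young tableau: a bijective filling by `1, …, n` where `n = |lam|`. -/
def IsStandard (lam : List ℕ) (n : ℕ) (T : IncTab lam n) : Prop :=
  n = lam.sum ∧ ∀ v, 1 ≤ v → v ≤ n → ∃! c, inShape lam c ∧ T.entry c = v

/-- Every value of `{1,…,q}` appears in the tableau. -/
def Packed (lam : List ℕ) (q : ℕ) (T : IncTab lam q) : Prop :=
  ∀ v, 1 ≤ v → v ≤ q → ∃ c : Cell, inShape lam c ∧ T.entry c = v

/-- During (K-)gromotion, a vacated box is recorded by the value `0` (a "bullet"). -/
def isBullet (lam : List ℕ) (f : Cell → ℕ) (c : Cell) : Prop :=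
  inShape lam c ∧ f c = 0

/-- `c` carries value `v` and is adjacent (on its left or above) to a bullet box. -/
def inC (lam : List ℕ) (f : Cell → ℕ) (v : ℕ) (c : Cell) : Prop :=
  inShape lam c ∧ f c = v ∧
    ((1 ≤ c.2 ∧ isBullet lam f (c.1, c.2 - 1)) ∨ (1 ≤ c.1 ∧ isBullet lam f (c.1 - 1, c.2)))

/-- One K-jeu-de-taquin substep: simultaneously all boxes with value `v` adjacent to a
bullet become bullets, and the bullets adjacent to them receive value `v`. -/
noncomputable def substep (lam : List ℕ) (v : ℕ) (f : Cell → ℕ) : Cell → ℕ :=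
  fun c =>
    if inC lam f v c then 0
    else if isBullet lam f c ∧ (inC lam f v (c.1, c.2 + 1) ∨ inC lam f v (c.1 + 1, c.2)) then v
    else f c

/-- The `j`-th value of the cyclically shifted alphabet `(α < α+1 < … < q < 1 < … < α-1)`. -/
def cyc (q α j : ℕ) : ℕ := (α - 1 + j) % q + 1

/-- State of the gromotion slide (at stage `α` of the alphabet cycle) after `j` substeps;
the base case deletes the minimal letter `α` from the upper-left corner. -/
noncomputable def iterSub (lam : List ℕ) (q α : ℕ) (f : Cell → ℕ) : ℕ → Cell → ℕ
  | 0 => fun c => if c = ((0, 0) : Cell) ∧ f c = α then 0 else f c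
  | j + 1 => substep lam (cyc q α (j + 1)) (iterSub lam q α f j)

/-- One application of (K-)gromotion at stage `α`: slide, then fill the vacated boxes
with the removed letter `α` (now maximal in the cycled alphabet). -/
noncomputable def gromote (lam : List ℕ) (q α : ℕ) (f : Cell → ℕ) : Cell → ℕ :=
  fun c =>
    if inShape lam c ∧ iterSub lam q α f (q - 1) c = 0 then α
    else iterSub lam q α f (q - 1) c

/-- The `k`-th iterate of (K-)gromotion (stages cycle through `1, …, q`). -/
noncomputable def gromIter (lam : List ℕ) (q : ℕ) (f : Cell → ℕ) : ℕ → Cell → ℕ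
  | 0 => f
  | k + 1 => gromote lam q (k % q + 1) (gromIter lam q f k)

/-- In state `f`, the value `v` is about to move from row `i+1` to row `i` (1-indexed):
a bullet in (1-indexed) row `i` has the box below it about to slide up with value `v`. -/
def moveAt (lam : List ℕ) (f : Cell → ℕ) (v i : ℕ) : Prop :=
  ∃ c : Cell, isBullet lam f c ∧ c.1 + 1 = i ∧ inC lam f v (c.1 + 1, c.2)

/-- Edge `α → β` of the `i`-th promotion digraph `prom_i(T)`:
during the `α`-th application of (K-)gromotion, value `β` moves from row `i+1` to row `i`. -/
def promEdge (lam : List ℕ) (q i : ℕ) (T : IncTab lam q) (α β : ℕ) : Prop :=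
  1 ≤ α ∧ α ≤ q ∧
  ∃ j : ℕ, j + 1 ≤ q - 1 ∧ cyc q α (j + 1) = β ∧
    moveAt lam (iterSub lam q α (gromIter lam q T.entry (α - 1)) j) β i

/-- (K-)promotion: gromotion at stage `1` followed by the relabeling `v ↦ v - 1`,
with the removed letter (temporarily `1`) becoming `q`. -/
noncomputable def kpromote (lam : List ℕ) (q : ℕ) (f : Cell → ℕ) : Cell → ℕ :=
  fun c =>
    if inShape lam c then
      (if gromote lam q 1 f c = 1 then q else gromote lam q 1 f c - 1)
    else 0

/-- Value `v` appears in (1-indexed) row `r` of the filling `f`. -/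
def appearsRow (lam : List ℕ) (f : Cell → ℕ) (r v : ℕ) : Prop :=
  1 ≤ r ∧ ∃ j : ℕ, inShape lam (r - 1, j) ∧ f (r - 1, j) = v

/-- The letter of the lattice word at position `v`: the set of (1-indexed) rows
containing value `v`. -/
def rowSetW (lam : List ℕ) (f : Cell → ℕ) (v : ℕ) : Set ℕ :=
  {r | appearsRow lam f r v}

/-- For a standard filling: the (1-indexed) row containing value `v`. -/
noncomputable def latticeRow (lam : List ℕ) (f : Cell → ℕ) (v : ℕ) : ℕ :=
  sInf {r | appearsRow lam f r v}

/-- Number of occurrences of letter `r` among the first `j` letters of the lattice word: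
the number of values `v ≤ j` appearing in row `r`. -/
noncomputable def cnt (lam : List ℕ) (f : Cell → ℕ) (r j : ℕ) : ℕ :=
  ((Finset.Icc 1 j).filter fun v => appearsRow lam f r v).card

/-- `j` is a (1-)balance point of the lattice word of a two-row filling. -/
def isBalance (lam : List ℕ) (f : Cell → ℕ) (j : ℕ) : Prop :=
  cnt lam f 1 j = cnt lam f 2 j

/-- `j` is a (1-)teetering point of the lattice word of a two-row filling. -/
def isTeeter (lam : List ℕ) (f : Cell → ℕ) (j : ℕ) : Prop :=
  appearsRow lam f 1 j ∧ appearsRow lam f 2 j ∧ cnt lam f 1 j = cnt lam f 2 j + 1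

/-- A noncrossing perfect matching of `{1,…,n}`, as a symmetric relation. -/
def IsNCMatching (n : ℕ) (M : ℕ → ℕ → Prop) : Prop :=
  (∀ a b, M a b → 1 ≤ a ∧ a ≤ n ∧ 1 ≤ b ∧ b ≤ n ∧ a ≠ b) ∧
  (∀ a b, M a b → M b a) ∧
  (∀ a, 1 ≤ a → a ≤ n → ∃! b, M a b) ∧
  (∀ a b x y, M a x → M b y → ¬ (a < b ∧ b < x ∧ x < y))

/-- Number of occurrences of letter `r` among positions `a, …, b` of the lattice word
of a standard two-row filling. -/
noncomputable def letterCnt (lam : List ℕ) (f : Cell → ℕ) (r a b : ℕ) : ℕ :=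
  ((Finset.Icc a b).filter fun p => latticeRow lam f p = r).card

/-- Positions `a < b` are matched in the noncrossing matching of the lattice word:
`w_a = 1`, `w_b = 2`, the interval `[a,b]` is balanced, and every proper prefix of it
has strictly more `1`s than `2`s (i.e. `b` is the nearest available `2` for `a`). -/
def matchRel (lam : List ℕ) (f : Cell → ℕ) (a b : ℕ) : Prop :=
  a < b ∧ latticeRow lam f a = 1 ∧ latticeRow lam f b = 2 ∧
  letterCnt lam f 1 a b = letterCnt lam f 2 a b ∧
  ∀ m, a ≤ m → m < b → letterCnt lam f 2 a m < letterCnt lam f 1 a m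

/-- The (symmetrized) noncrossing matching associated to a two-row standard filling. -/
def symMatch (lam : List ℕ) (f : Cell → ℕ) (a b : ℕ) : Prop :=
  matchRel lam f a b ∨ matchRel lam f b a

/-- A noncrossing set partition of `{1,…,q}`, encoded by its "same block" relation. -/
def IsNCPartition (q : ℕ) (R : ℕ → ℕ → Prop) : Prop :=
  (∀ a b, R a b → 1 ≤ a ∧ a ≤ q ∧ 1 ≤ b ∧ b ≤ q) ∧
  (∀ a, 1 ≤ a → a ≤ q → R a a) ∧
  (∀ a b, R a b → R b a) ∧
  (∀ a b c, R a b → R b c → R a c) ∧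
  (∀ a b x y, a < x → x < b → b < y → R a b → R x y → R a x)

/-- The defining compatibility between a two-row increasing tableau (given by its
filling `f`) and its noncrossing set partition `R` (Pechenik): singleton blocks are
the absent values; least elements of nontrivial blocks are the values appearing only
in the top row; greatest elements are the values appearing only in the bottom row;
middle elements are the values appearing in both rows. -/
def BlockCompat (lam : List ℕ) (q : ℕ) (f : Cell → ℕ) (R : ℕ → ℕ → Prop) : Prop :=
  ∀ v, 1 ≤ v → v ≤ q →
    ((∀ u, R v u → u = v) ↔ ¬ ∃ c : Cell, inShape lam c ∧ f c = v) ∧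
    (((∃ u, R v u ∧ v < u) ∧ ∀ u, R v u → v ≤ u) ↔
      (appearsRow lam f 1 v ∧ ¬ appearsRow lam f 2 v)) ∧
    (((∃ u, R v u ∧ u < v) ∧ ∀ u, R v u → u ≤ v) ↔
      (appearsRow lam f 2 v ∧ ¬ appearsRow lam f 1 v)) ∧
    (((∃ u, R v u ∧ u < v) ∧ (∃ u, R v u ∧ v < u)) ↔
      (appearsRow lam f 1 v ∧ appearsRow lam f 2 v))

/-!
During the first `q` gromotions the filling stays increasing for the cyclic order starting at
the current stage letter: while the letters of stage `α` slide, the bullets sit strictly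
between the letters that have already slid and those still to slide, and refilling the bullets
with `α` makes `α` the largest letter of the next stage. So before the `l`-th gromotion `l` is
the smallest letter and can only occupy the upper-left corner. During a slide letters only move
left or up; hence a copy of `l` in a row `≥ k` (counted from `0`) reaches the corner within the
first `l - 1` gromotions only by moving from row `k` to row `k - 1`, that is along an edge
`j → l` of `prom_k(T)` with `j < l`. Conversely such an edge exhibits `l` in row `k` at a time
when every copy of `l` descends from a copy in `T` in the same row or lower.
-/

def CellAdj (c d : Cell) : Prop := d = (c.1, c.2 + 1) ∨ d = (c.1 + 1, c.2)

lemma CellAdj.ne_corner {c d : Cell} (h : CellAdj c d) : d ≠ (0, 0) := by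
  rcases h with rfl | rfl <;> simp

lemma inShape_of_succ_col {lam : List ℕ} {a b : ℕ} (h : inShape lam (a, b + 1)) :
    inShape lam (a, b) := by
  unfold inShape at h ⊢
  simp only at h ⊢
  omega

lemma lt_length_of_inShape {lam : List ℕ} {c : Cell} (h : inShape lam c) :
    c.1 < lam.length := by
  by_contra hc
  rw [inShape, List.getD_eq_default _ _ (by omega)] at h
  omega

lemma inShape_of_succ_row {lam : List ℕ} (hlam : IsPartition lam) {a b : ℕ}
    (h : inShape lam (a + 1, b)) : inShape lam (a, b) := by
  have ha : a + 1 < lam.length := lt_length_of_inShape h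
  unfold inShape at h ⊢
  simp only at h ⊢
  rw [List.getD_eq_getElem _ _ ha] at h
  rw [List.getD_eq_getElem _ _ (by omega)]
  have := List.pairwise_iff_getElem.mp hlam.1 a (a + 1) (by omega) ha (by omega)
  omega

lemma exists_cellAdj_of_ne_corner {lam : List ℕ} (hlam : IsPartition lam) {c : Cell}
    (hc : inShape lam c) (hne : c ≠ (0, 0)) : ∃ p, inShape lam p ∧ CellAdj p c := by
  obtain ⟨a, _ | b⟩ := c
  · obtain _ | a := a
    · exact absurd rfl hne
    · exact ⟨(a, 0), inShape_of_succ_row hlam hc, Or.inr rfl⟩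
  · exact ⟨(a, b), inShape_of_succ_col hc, Or.inl rfl⟩

/-- Position of `v` in the cyclic order `α < α+1 < … < q < 1 < … < α-1`. -/
def cycRank (q α v : ℕ) : ℕ := if α ≤ v then v - α else v + q - α

lemma cyc_eq {q α s : ℕ} (hα1 : 1 ≤ α) (hαq : α ≤ q) (hs : s + 1 < q) :
    cyc q α (s + 1) = if α + s < q then α + s + 1 else α + s + 1 - q := by
  rw [cyc, show α - 1 + (s + 1) = α + s by omega]
  split_ifs with h
  · rw [Nat.mod_eq_of_lt h]
  · rw [show α + s = α + s - q + q by omega, Nat.add_mod_right, Nat.mod_eq_of_lt (by omega)]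
    omega

section CycRank

variable {q α : ℕ}

lemma cyc_mem_Icc (hα1 : 1 ≤ α) (hαq : α ≤ q) {s : ℕ} (hs : s + 1 < q) :
    cyc q α (s + 1) ∈ Set.Icc 1 q := by
  rw [cyc_eq hα1 hαq hs, Set.mem_Icc]
  split_ifs <;> omega

lemma cycRank_cyc (hα1 : 1 ≤ α) (hαq : α ≤ q) {s : ℕ} (hs : s + 1 < q) :
    cycRank q α (cyc q α (s + 1)) = s + 1 := by
  rw [cyc_eq hα1 hαq hs, cycRank]
  split_ifs <;> omega

lemma cycRank_injOn (hαq : α ≤ q) : Set.InjOn (cycRank q α) (Set.Icc 1 q) := by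
  rintro x ⟨hx1, hxq⟩ y ⟨hy1, hyq⟩ h
  unfold cycRank at h
  split_ifs at h <;> omega

lemma cycRank_lt (hα1 : 1 ≤ α) (hαq : α ≤ q) {x : ℕ} (hxq : x ≤ q) : cycRank q α x < q := by
  unfold cycRank
  split_ifs <;> omega

lemma cycRank_succ (hα1 : 1 ≤ α) (hαq : α < q) {x : ℕ} (hx1 : 1 ≤ x)
    (hxα : x ≠ α) : cycRank q (α + 1) x + 1 = cycRank q α x := by
  unfold cycRank
  split_ifs <;> omega

lemma cycRank_succ_self (hαq : α < q) : cycRank q (α + 1) α = q - 1 := by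
  unfold cycRank
  split_ifs <;> omega

end CycRank

structure IsCycIncreasing (lam : List ℕ) (q α : ℕ) (f : Cell → ℕ) : Prop where
  zero_outside : ∀ c, ¬ inShape lam c → f c = 0
  pos : ∀ c, inShape lam c → 1 ≤ f c
  le : ∀ c, inShape lam c → f c ≤ q
  cycRank_lt_of_adj : ∀ c d, inShape lam c → inShape lam d → CellAdj c d →
    cycRank q α (f c) < cycRank q α (f d)

lemma IncTab.isCycIncreasing {lam : List ℕ} {q : ℕ} (T : IncTab lam q) :
    IsCycIncreasing lam q 1 T.entry where
  zero_outside := T.zero_outside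
  pos := T.entry_pos
  le := T.entry_le
  cycRank_lt_of_adj := by
    rintro ⟨a, b⟩ d hc hd hadj
    have hlt : T.entry (a, b) < T.entry d := by
      rcases hadj with rfl | rfl
      · exact T.row_strict a b hd
      · exact T.col_strict a b hd
    have := T.entry_pos _ hc
    unfold cycRank
    split_ifs <;> omega

lemma IsCycIncreasing.eq_corner {lam : List ℕ} (hlam : IsPartition lam) {q α : ℕ}
    {f : Cell → ℕ} (hf : IsCycIncreasing lam q α f) {c : Cell} (hc : inShape lam c)
    (hfc : f c = α) : c = (0, 0) := by
  by_contra hne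
  obtain ⟨p, hp, hpc⟩ := exists_cellAdj_of_ne_corner hlam hc hne
  have := hf.cycRank_lt_of_adj p c hp hc hpc
  simp only [hfc, cycRank, le_refl, if_true, Nat.sub_self] at this
  omega

lemma substep_eq_self_or (lam : List ℕ) (v : ℕ) (g : Cell → ℕ) (c : Cell) :
    substep lam v g c = g c ∨
      inShape lam c ∧ (g c = 0 ∨ g c = v) ∧ (substep lam v g c = 0 ∨ substep lam v g c = v) := by
  unfold substep
  split_ifs with h₁ h₂
  · exact Or.inr ⟨h₁.1, Or.inr h₁.2.1, Or.inl rfl⟩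
  · exact Or.inr ⟨h₂.1.1, Or.inl h₂.1.2, Or.inr rfl⟩
  · exact Or.inl rfl

lemma substep_of_inC {lam : List ℕ} {v : ℕ} {g : Cell → ℕ} {c : Cell} (h : inC lam g v c) :
    substep lam v g c = 0 :=
  if_pos h

lemma substep_of_not_inC {lam : List ℕ} {v : ℕ} {g : Cell → ℕ} {c : Cell}
    (h : ¬ inC lam g v c) (hc : g c ≠ 0) : substep lam v g c = g c := by
  unfold substep
  rw [if_neg h, if_neg fun h' => hc h'.1.2]

lemma substep_of_isBullet {lam : List ℕ} {v : ℕ} {g : Cell → ℕ} {p : Cell} (hv : v ≠ 0)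
    (hp : isBullet lam g p) (h : inC lam g v (p.1, p.2 + 1) ∨ inC lam g v (p.1 + 1, p.2)) :
    substep lam v g p = v := by
  unfold substep
  rw [if_neg fun h' => hv (h'.2.1.symm.trans hp.2), if_pos ⟨hp, h⟩]

lemma inC_of_cellAdj {lam : List ℕ} {g : Cell → ℕ} {v : ℕ} {c d : Cell} (hadj : CellAdj c d)
    (hc : isBullet lam g c) (hd : inShape lam d) (hgd : g d = v) : inC lam g v d := by
  rcases hadj with rfl | rfl
  · exact ⟨hd, hgd, Or.inl ⟨Nat.le_add_left _ _, hc⟩⟩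
  · exact ⟨hd, hgd, Or.inr ⟨Nat.le_add_left _ _, hc⟩⟩

lemma inC_succ_or_of_cellAdj {lam : List ℕ} {g : Cell → ℕ} {v : ℕ} {c d : Cell}
    (hadj : CellAdj c d) (hd : inC lam g v d) :
    inC lam g v (c.1, c.2 + 1) ∨ inC lam g v (c.1 + 1, c.2) := by
  rcases hadj with rfl | rfl
  · exact Or.inl hd
  · exact Or.inr hd

/-- After `s` substeps of a slide the bullets sit strictly between the letters of cyclic rank
`s` and `s + 1`. -/
def slideKey (q α s x : ℕ) : ℕ := if x = 0 then 2 * s + 1 else 2 * cycRank q α x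

structure SlideInv (lam : List ℕ) (q α s : ℕ) (g : Cell → ℕ) : Prop where
  zero_outside : ∀ c, ¬ inShape lam c → g c = 0
  le : ∀ c, inShape lam c → g c ≤ q
  ne : ∀ c, g c ≠ α
  slideKey_lt_of_adj : ∀ c d, inShape lam c → inShape lam d → CellAdj c d →
    slideKey q α s (g c) < slideKey q α s (g d)

section Slide

variable {lam : List ℕ} {q α s v : ℕ} {g : Cell → ℕ}

lemma slideKey_of_ne_zero (t : ℕ) {x : ℕ} (hx : x ≠ 0) :
    slideKey q α t x = 2 * cycRank q α x :=
  if_neg hx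

lemma slideKey_substep_of_ne (t : ℕ) {x : Cell} (hx0 : g x ≠ 0) (hxv : g x ≠ v) :
    slideKey q α t (substep lam v g x) = slideKey q α s (g x) := by
  rcases substep_eq_self_or lam v g x with h | ⟨-, h, -⟩
  · rw [h, slideKey_of_ne_zero t hx0, slideKey_of_ne_zero s hx0]
  · tauto

lemma slideKey_substep_mem (hv : cycRank q α v = s + 1) (hv0 : v ≠ 0) {x : Cell}
    (hx : g x = 0 ∨ g x = v) :
    slideKey q α s (g x) ≤ 2 * s + 2 ∧ 2 * s + 2 ≤ slideKey q α (s + 1) (substep lam v g x) ∧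
      slideKey q α (s + 1) (substep lam v g x) ≤ 2 * s + 3 := by
  have hx' : substep lam v g x = 0 ∨ substep lam v g x = v := by
    rcases substep_eq_self_or lam v g x with h | ⟨-, -, h⟩
    · rwa [h]
    · exact h
  rcases hx with h | h <;> rcases hx' with h' | h' <;>
    simp only [h, h', slideKey, hv, hv0, if_true, if_false] <;> omega

lemma slideKey_le_slideKey_substep (hv : cycRank q α v = s + 1) (hv0 : v ≠ 0) (x : Cell) :
    slideKey q α s (g x) ≤ slideKey q α (s + 1) (substep lam v g x) := by
  by_cases hx : g x = 0 ∨ g x = v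
  · obtain ⟨h₁, h₂, -⟩ := slideKey_substep_mem (lam := lam) hv hv0 hx
    omega
  · push Not at hx
    exact (slideKey_substep_of_ne _ hx.1 hx.2).ge

lemma slideKey_substep_lt (hα1 : 1 ≤ α) (hαq : α ≤ q) (hs : s + 1 < q)
    {c d : Cell} (hc : inShape lam c) (hd : inShape lam d) (hadj : CellAdj c d)
    (hgd : g d ≤ q) (hlt : slideKey q α s (g c) < slideKey q α s (g d)) :
    slideKey q α (s + 1) (substep lam (cyc q α (s + 1)) g c) <
      slideKey q α (s + 1) (substep lam (cyc q α (s + 1)) g d) := by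
  set v := cyc q α (s + 1)
  have hv : cycRank q α v = s + 1 := cycRank_cyc hα1 hαq hs
  obtain ⟨hv1, hvq⟩ := cyc_mem_Icc hα1 hαq hs
  have hv0 : v ≠ 0 := by omega
  have key_zero : slideKey q α s 0 = 2 * s + 1 := if_pos rfl
  have key_v : slideKey q α s v = 2 * s + 2 := by rw [slideKey_of_ne_zero s hv0, hv]; ring
  by_cases hmove : g c = 0 ∧ g d = v
  -- the bullet at `c` and the copy of `v` at `d` trade places
  · have hdC := inC_of_cellAdj hadj ⟨hc, hmove.1⟩ hd hmove.2
    rw [substep_of_inC hdC, substep_of_isBullet hv0 ⟨hc, hmove.1⟩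
      (inC_succ_or_of_cellAdj hadj hdC), slideKey_of_ne_zero _ hv0, hv, slideKey, if_pos rfl]
    omega
  by_cases hcv : g c = 0 ∨ g c = v
  · have hc_key : 2 * s + 1 ≤ slideKey q α s (g c) := by
      rcases hcv with h | h <;> rw [h] <;> omega
    have hd0 : g d ≠ 0 := fun h => by rw [h] at hlt; omega
    have hdv : g d ≠ v := by
      rintro h
      rcases hcv with h' | h'
      · exact hmove ⟨h', h⟩
      · rw [h, h'] at hlt; omega
    have hd_rank : cycRank q α (g d) ≠ s + 1 := fun h =>
      hdv (cycRank_injOn hαq ⟨by omega, hgd⟩ ⟨hv1, hvq⟩ (h.trans hv.symm))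
    have hd_key : 2 * s + 4 ≤ slideKey q α s (g d) := by
      rw [slideKey_of_ne_zero s hd0] at hlt ⊢
      omega
    calc slideKey q α (s + 1) (substep lam v g c) ≤ 2 * s + 3 :=
          (slideKey_substep_mem hv hv0 hcv).2.2
      _ < slideKey q α s (g d) := by omega
      _ = slideKey q α (s + 1) (substep lam v g d) := (slideKey_substep_of_ne _ hd0 hdv).symm
  · push Not at hcv
    calc slideKey q α (s + 1) (substep lam v g c) = slideKey q α s (g c) :=
          slideKey_substep_of_ne _ hcv.1 hcv.2
      _ < slideKey q α s (g d) := hlt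
      _ ≤ slideKey q α (s + 1) (substep lam v g d) := slideKey_le_slideKey_substep hv hv0 d

lemma SlideInv.substep (hα1 : 1 ≤ α) (hαq : α ≤ q) (hs : s + 1 < q)
    (hg : SlideInv lam q α s g) :
    SlideInv lam q α (s + 1) (substep lam (cyc q α (s + 1)) g) := by
  obtain ⟨hv1, hvq⟩ := cyc_mem_Icc hα1 hαq hs
  have hvα : cyc q α (s + 1) ≠ α := fun h => by
    have := cycRank_cyc hα1 hαq hs
    rw [h, cycRank, if_pos le_rfl] at this
    omega
  refine ⟨fun c hc => ?_, fun c hc => ?_, fun c => ?_, fun c d hc hd hadj => ?_⟩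
  · rcases substep_eq_self_or lam (cyc q α (s + 1)) g c with h | h
    · rw [h, hg.zero_outside c hc]
    · exact absurd h.1 hc
  · rcases substep_eq_self_or lam (cyc q α (s + 1)) g c with h | ⟨-, -, h | h⟩ <;> rw [h]
    exacts [hg.le c hc, Nat.zero_le q, hvq]
  · rcases substep_eq_self_or lam (cyc q α (s + 1)) g c with h | ⟨-, -, h | h⟩ <;> rw [h]
    exacts [hg.ne c, by omega, hvα]
  · exact slideKey_substep_lt hα1 hαq hs hc hd hadj (hg.le d hd)
      (hg.slideKey_lt_of_adj c d hc hd hadj)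

end Slide

lemma IsCycIncreasing.slideInv_iterSub_zero {lam : List ℕ} (hlam : IsPartition lam)
    {q α : ℕ} {f : Cell → ℕ} (hα1 : 1 ≤ α) (hf : IsCycIncreasing lam q α f) :
    SlideInv lam q α 0 (iterSub lam q α f 0) := by
  refine ⟨fun c hc => ?_, fun c hc => ?_, fun c => ?_, fun c d hc hd hadj => ?_⟩
  · simp only [iterSub, hf.zero_outside c hc, ite_self]
  · simp only [iterSub]
    split_ifs
    exacts [Nat.zero_le q, hf.le c hc]
  · simp only [iterSub]
    split_ifs with h
    · omega
    · intro hfc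
      by_cases hc : inShape lam c
      · exact h ⟨hf.eq_corner hlam hc hfc, hfc⟩
      · rw [hf.zero_outside c hc] at hfc
        omega
  · have hlt := hf.cycRank_lt_of_adj c d hc hd hadj
    have hkd : slideKey q α 0 (f d) = 2 * cycRank q α (f d) :=
      slideKey_of_ne_zero 0 (by have := hf.pos d hd; omega)
    simp only [iterSub, hadj.ne_corner, false_and, if_false, hkd]
    split_ifs with h
    · rw [h.2, cycRank, if_pos le_rfl, Nat.sub_self] at hlt
      simp only [slideKey, if_true]
      omega
    · rw [slideKey_of_ne_zero 0 (by have := hf.pos c hc; omega)]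
      omega

lemma IsCycIncreasing.slideInv_iterSub {lam : List ℕ} (hlam : IsPartition lam)
    {q α : ℕ} {f : Cell → ℕ} (hα1 : 1 ≤ α) (hαq : α ≤ q) (hf : IsCycIncreasing lam q α f) :
    ∀ j, j ≤ q - 1 → SlideInv lam q α j (iterSub lam q α f j)
  | 0, _ => hf.slideInv_iterSub_zero hlam hα1
  | j + 1, hj => (hf.slideInv_iterSub hlam hα1 hαq j (by omega)).substep hα1 hαq (by omega)

/-- After the slide every bullet carries the largest key, so refilling the bullets with `α`,
the largest letter of the order starting at `α + 1`, gives an increasing filling. -/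
lemma SlideInv.isCycIncreasing_refill {lam : List ℕ} {q α : ℕ} {g : Cell → ℕ}
    (hα1 : 1 ≤ α) (hαq : α < q) (hg : SlideInv lam q α (q - 1) g) :
    IsCycIncreasing lam q (α + 1) fun c => if inShape lam c ∧ g c = 0 then α else g c := by
  refine ⟨fun c hc => ?_, fun c hc => ?_, fun c hc => ?_, fun c d hc hd hadj => ?_⟩
  · simp only [hc, false_and, if_false]
    exact hg.zero_outside c hc
  · split_ifs with h
    · exact hα1
    · exact Nat.one_le_iff_ne_zero.mpr fun h0 => h ⟨hc, h0⟩
  · split_ifs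
    exacts [hαq.le, hg.le c hc]
  · have hlt := hg.slideKey_lt_of_adj c d hc hd hadj
    split_ifs with h₁ h₂ h₂
    · rw [h₁.2, h₂.2] at hlt
      omega
    · exfalso
      have hd0 : g d ≠ 0 := fun h0 => h₂ ⟨hd, h0⟩
      rw [h₁.2, slideKey_of_ne_zero _ hd0] at hlt
      simp only [slideKey, if_true] at hlt
      have := cycRank_lt hα1 hαq.le (hg.le d hd)
      omega
    · have hc0 : g c ≠ 0 := fun h0 => h₁ ⟨hc, h0⟩
      have := cycRank_succ hα1 hαq (Nat.one_le_iff_ne_zero.mpr hc0) (hg.ne c)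
      have := cycRank_lt hα1 hαq.le (hg.le c hc)
      rw [cycRank_succ_self hαq]
      omega
    · have hc0 : g c ≠ 0 := fun h0 => h₁ ⟨hc, h0⟩
      have hd0 : g d ≠ 0 := fun h0 => h₂ ⟨hd, h0⟩
      have := cycRank_succ hα1 hαq (Nat.one_le_iff_ne_zero.mpr hc0) (hg.ne c)
      have := cycRank_succ hα1 hαq (Nat.one_le_iff_ne_zero.mpr hd0) (hg.ne d)
      rw [slideKey_of_ne_zero _ hc0, slideKey_of_ne_zero _ hd0] at hlt
      omega

lemma IsCycIncreasing.gromote {lam : List ℕ} (hlam : IsPartition lam) {q α : ℕ}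
    {f : Cell → ℕ} (hα1 : 1 ≤ α) (hαq : α < q) (hf : IsCycIncreasing lam q α f) :
    IsCycIncreasing lam q (α + 1) (gromote lam q α f) :=
  (hf.slideInv_iterSub hlam hα1 hαq.le (q - 1) le_rfl).isCycIncreasing_refill hα1 hαq

lemma isCycIncreasing_gromIter {lam : List ℕ} (hlam : IsPartition lam) {q : ℕ}
    (T : IncTab lam q) : ∀ m, m < q → IsCycIncreasing lam q (m + 1) (gromIter lam q T.entry m)
  | 0, _ => T.isCycIncreasing
  | m + 1, hm => by
    rw [gromIter, Nat.mod_eq_of_lt (by omega : m < q)]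
    exact (isCycIncreasing_gromIter hlam T m (by omega)).gromote hlam (by omega) hm

/-- Rows are counted from `0` here, so these are the rows below row `k` of `promEdge`, which
counts them from `1`. -/
def OccursFromRow (k l : ℕ) (g : Cell → ℕ) : Prop := ∃ c : Cell, g c = l ∧ k ≤ c.1

section Occurrence

variable {lam : List ℕ} {q α k l : ℕ}

lemma OccursFromRow.iterSub_zero {f : Cell → ℕ} (hk : 1 ≤ k) (h : OccursFromRow k l f) :
    OccursFromRow k l (iterSub lam q α f 0) := by
  obtain ⟨c, hc, hkc⟩ := h
  refine ⟨c, ?_, hkc⟩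
  simp only [iterSub]
  rw [if_neg]
  · exact hc
  · rintro ⟨rfl, -⟩
    exact absurd hkc (by simp only; omega)

lemma OccursFromRow.substep {g : Cell → ℕ} {w : ℕ} (hl : 1 ≤ l)
    (hmove : w = l → ¬ moveAt lam g l k) (h : OccursFromRow k l g) :
    OccursFromRow k l (substep lam w g) := by
  obtain ⟨⟨x, y⟩, hc, hkx⟩ := h
  by_cases hC : inC lam g w (x, y)
  · have hwl : w = l := hC.2.1.symm.trans hc
    subst hwl
    rcases hC.2.2 with ⟨hy, hbul⟩ | ⟨hx, hbul⟩
    · obtain ⟨y, rfl⟩ : ∃ y', y = y' + 1 := ⟨y - 1, by omega⟩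
      exact ⟨(x, y), substep_of_isBullet (by omega) hbul (Or.inl hC), hkx⟩
    · obtain ⟨x, rfl⟩ : ∃ x', x = x' + 1 := ⟨x - 1, by omega⟩
      have hkx' : k ≤ x := by
        by_contra hxk
        exact hmove rfl ⟨(x, y), hbul, by simp only at hkx ⊢; omega, hC⟩
      exact ⟨(x, y), substep_of_isBullet (by omega) hbul (Or.inr hC), hkx'⟩
  · exact ⟨(x, y), (substep_of_not_inC hC (by omega)).trans hc, hkx⟩

lemma OccursFromRow.refill {g : Cell → ℕ} (hl : 1 ≤ l) (h : OccursFromRow k l g) :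
    OccursFromRow k l fun c => if inShape lam c ∧ g c = 0 then α else g c := by
  obtain ⟨c, hc, hkc⟩ := h
  exact ⟨c, by simp only; rw [if_neg fun h' => by omega]; exact hc, hkc⟩

lemma OccursFromRow.gromote {f : Cell → ℕ} (hk : 1 ≤ k) (hl : 1 ≤ l)
    (hmove : ∀ j, j + 1 ≤ q - 1 → cyc q α (j + 1) = l → ¬ moveAt lam (iterSub lam q α f j) l k)
    (h : OccursFromRow k l f) : OccursFromRow k l (gromote lam q α f) := by
  suffices ∀ j, j ≤ q - 1 → OccursFromRow k l (iterSub lam q α f j) from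
    (this (q - 1) le_rfl).refill hl
  intro j
  induction j with
  | zero => exact fun _ => h.iterSub_zero hk
  | succ j ih => exact fun hj => (ih (by omega)).substep hl (hmove j hj)

lemma OccursFromRow.of_substep {g : Cell → ℕ} {w : ℕ} (hl : 1 ≤ l)
    (h : OccursFromRow k l (_root_.substep lam w g)) : OccursFromRow k l g := by
  obtain ⟨c, hc, hkc⟩ := h
  unfold _root_.substep at hc
  split_ifs at hc with h₁ h₂
  · omega
  · rcases h₂.2 with h₃ | h₃
    · exact ⟨_, h₃.2.1.trans hc, hkc⟩
    · exact ⟨_, h₃.2.1.trans hc, by simp only; omega⟩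
  · exact ⟨c, hc, hkc⟩

lemma OccursFromRow.of_iterSub {f : Cell → ℕ} (hl : 1 ≤ l) :
    ∀ j, OccursFromRow k l (iterSub lam q α f j) → OccursFromRow k l f
  | 0, ⟨c, hc, hkc⟩ => by
    simp only [iterSub] at hc
    split_ifs at hc
    · omega
    · exact ⟨c, hc, hkc⟩
  | j + 1, h => OccursFromRow.of_iterSub hl j (OccursFromRow.of_substep hl h)

lemma OccursFromRow.of_gromIter {f : Cell → ℕ} (hl : 1 ≤ l) :
    ∀ m, m < l → OccursFromRow k l (gromIter lam q f m) → OccursFromRow k l f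
  | 0, _, h => h
  | m + 1, hm, ⟨c, hc, hkc⟩ => by
    have hα : m % q + 1 ≠ l := by have := Nat.mod_le m q; omega
    simp only [gromIter, _root_.gromote] at hc
    split_ifs at hc
    · exact absurd hc hα
    · exact OccursFromRow.of_gromIter hl m (by omega)
        (OccursFromRow.of_iterSub hl (q - 1) ⟨c, hc, hkc⟩)

end Occurrence

lemma IncTab.occursFromRow_entry_iff {lam : List ℕ} {q k l : ℕ} (T : IncTab lam q)
    (hl : 1 ≤ l) :
    OccursFromRow k l T.entry ↔ ∃ c : Cell, inShape lam c ∧ T.entry c = l ∧ k ≤ c.1 := by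
  refine ⟨fun ⟨c, hc, hkc⟩ => ⟨c, ?_, hc, hkc⟩, fun ⟨c, _, hc, hkc⟩ => ⟨c, hc, hkc⟩⟩
  by_contra hcs
  rw [T.zero_outside c hcs] at hc
  omega

lemma exists_promEdge_of_occursFromRow {lam : List ℕ} (hlam : IsPartition lam) {q k l : ℕ}
    (T : IncTab lam q) (hk : 1 ≤ k) (hl1 : 1 ≤ l) (hlq : l ≤ q)
    (h : OccursFromRow k l T.entry) : ∃ j, j < l ∧ promEdge lam q k T j l := by
  by_contra hno
  have hocc : ∀ m, m < l → OccursFromRow k l (gromIter lam q T.entry m) := by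
    intro m
    induction m with
    | zero => exact fun _ => h
    | succ m ih =>
      intro hm
      rw [gromIter, Nat.mod_eq_of_lt (by omega : m < q)]
      refine (ih (by omega)).gromote hk hl1 fun j hj hcyc hmove => hno ⟨m + 1, hm, ?_⟩
      exact ⟨by omega, by omega, j, hj, hcyc, hmove⟩
  obtain ⟨c, hc, hkc⟩ := hocc (l - 1) (by omega)
  have hinc := isCycIncreasing_gromIter hlam T (l - 1) (by omega)
  rw [Nat.sub_add_cancel hl1] at hinc
  have hcs : inShape lam c := by
    by_contra hcs
    rw [hinc.zero_outside c hcs] at hc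
    omega
  rw [hinc.eq_corner hlam hcs hc] at hkc
  exact absurd hkc (by simp only; omega)

lemma occursFromRow_of_promEdge {lam : List ℕ} {q k l j : ℕ} {T : IncTab lam q} (hl : 1 ≤ l)
    (hjl : j < l) (h : promEdge lam q k T j l) : OccursFromRow k l T.entry := by
  obtain ⟨-, -, s, -, -, b, -, hbk, hmove⟩ := h
  have hocc : OccursFromRow k l (iterSub lam q j (gromIter lam q T.entry (j - 1)) s) :=
    ⟨_, hmove.2.1, by simp only; omega⟩
  exact (hocc.of_iterSub hl s).of_gromIter hl (j - 1) (by omega)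

theorem exists_cell_row_ge_iff_exists_promEdge {lam : List ℕ} (hlam : IsPartition lam)
    {q k l : ℕ} (T : IncTab lam q) (hk : 1 ≤ k) (hl1 : 1 ≤ l) (hlq : l ≤ q) :
    (∃ c : Cell, inShape lam c ∧ T.entry c = l ∧ k ≤ c.1) ↔
      ∃ j, j < l ∧ promEdge lam q k T j l := by
  rw [← T.occursFromRow_entry_iff hl1]
  exact ⟨exists_promEdge_of_occursFromRow hlam T hk hl1 hlq,
    fun ⟨j, hjl, hj⟩ => occursFromRow_of_promEdge hl1 hjl hj⟩

/-- a value `l` appears in the union of the bottom `i` rows of an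
increasing tableau with `r` rows iff `l` is an excedance of `prom_{r-i}(T)`; in
particular the bottom-row entries are exactly the excedances of `prom_{r-1}(T)`. -/
theorem bottom_rows_are_excedances
    (lam : List ℕ) (hlam : IsPartition lam) (q : ℕ) (T : IncTab lam q) :
    (∀ i, 1 ≤ i → i < lam.length → ∀ l, 1 ≤ l → l ≤ q →
      ((∃ c : Cell, inShape lam c ∧ T.entry c = l ∧ lam.length - i ≤ c.1) ↔
        ∃ j, j < l ∧ promEdge lam q (lam.length - i) T j l)) ∧
    (1 < lam.length → ∀ l, 1 ≤ l → l ≤ q →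
      ((∃ c : Cell, inShape lam c ∧ T.entry c = l ∧ c.1 = lam.length - 1) ↔
        ∃ j, j < l ∧ promEdge lam q (lam.length - 1) T j l)) := by
  refine ⟨fun i hi1 hi2 l hl1 hlq =>
    exists_cell_row_ge_iff_exists_promEdge hlam T (by omega) hl1 hlq, fun hlen l hl1 hlq => ?_⟩
  rw [← exists_cell_row_ge_iff_exists_promEdge hlam T (by omega) hl1 hlq]
  refine exists_congr fun c => and_congr_right fun hc => and_congr_right fun _ => ?_
  have := lt_length_of_inShape hc
  omega
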